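/- arXiv:2308.06082 — 2 statements merged into one kernel-verified Lean document; each statement's English description precedes it below -/
import Mathlib

section
/- Let n be even, let Q, Q', R, R', T, T' ∈ {0,1}^* with (R,T) ≠ (R',T') and all six lengths less than 2^{n/2}. If h_1, h_2 are chosen independently and uniformly at random from {0,1}^n, then Pr[ H_{h_1}(Q,T) ⊕ H_{h_1}(Q',T') ⊕ H_{h_2}(R,T) ⊕ H_{h_2}(R',T') = 0 ] ≤ ℓ / 2^n, where ℓ is the maximum of the degrees of the four hash values viewed as polynomials in h_1 and h_2 (so the left-hand side is a nonzero bivariate polynomial in (h_1, h_2) of total degree at most ℓ). -/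
/-- Integer represented by a bit string (msb-first). -/
def bitsToNat : List Bool → ℕ
  | [] => 0
  | b :: t => (if b then 2 ^ t.length else 0) + bitsToNat t

/-- An `n`-bit block from a bit string of length at most `n` (msb-first). -/
def blockToBV (n : ℕ) (l : List Bool) : BitVec n := BitVec.ofNat n (bitsToNat l)

/-- `pad`: append zeros on the right to get a full `n`-bit block. -/
def padBlock (n : ℕ) (l : List Bool) : BitVec n :=
  blockToBV n (l ++ List.replicate (n - l.length) false)

/-- `parse_n` followed by padding of the last block. -/
def blocksOf (n : ℕ) (Z : List Bool) : List (BitVec n) :=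
  (Z.toChunks n).map (padBlock n)

/-- Number of `n`-bit blocks obtained from parsing `Z`. -/
def numBlocks (n : ℕ) (Z : List Bool) : ℕ := (Z.toChunks n).length

/-- The length block `bin_{n/2}(|X|) ‖ bin_{n/2}(|T|)`. -/
def xcbLenBlock (n : ℕ) (X T : List Bool) : BitVec n :=
  BitVec.ofNat n (X.length * 2 ^ (n / 2) + T.length)

/-- The XCB hash `H_h(X,T) = X₁h^{m+p+1} ⊕ ⋯ ⊕ pad(X_m)h^{p+2} ⊕ T₁h^{p+1} ⊕ ⋯ ⊕
pad(T_p)h² ⊕ (bin_{n/2}(|X|)‖bin_{n/2}(|T|))h`, computed by Horner evaluation,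
where the equivalence `ι` identifies `{0,1}ⁿ` with `GF(2ⁿ)` (XOR = addition). -/
def xcbHash {n : ℕ} {F : Type*} [Field F] (ι : BitVec n ≃ F) (h : F)
    (X T : List Bool) : F :=
  ((blocksOf n X ++ blocksOf n T).map ι ++ [ι (xcbLenBlock n X T)]).foldl
    (fun acc c => (acc + c) * h) 0

/-!
For a fixed `h₁` the event says that `ι h₂` is a root of `q = c + P(R,T) + P(R',T')`, where
`P(X,T)` is the polynomial whose Horner evaluation is `xcbHash ι · X T` and the constant `c`
collects the `h₁`-terms. Since `ι` turns XOR into addition, `F` has characteristic 2; every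
`P(X,T)` has zero constant term, so `q = 0` would force `c = 0` and `P(R,T) = P(R',T')`.
The linear coefficient of `P(X,T)` is the length block, which determines `(|X|, |T|)` because
both lengths are below `2^(n/2)`. Equal lengths give equally many blocks, so the blocks are read
off from the coefficients, and the padded chunks of strings of equal length determine the
strings. Thus `q ≠ 0` has at most `deg q ≤ ℓ` roots for each of the `2ⁿ` values of `h₁`.
-/
namespace List

variable {α β : Type*} {n : ℕ}

lemma toChunks_go_eq (xs : List α) (acc₁ : Array α) (acc₂ : Array (List α))
    (h₀ : 0 < acc₁.size) (hsize : acc₁.size ≤ n) :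
    toChunks.go n xs acc₁ acc₂ =
      acc₂.toList ++ (acc₁.toList ++ xs.take (n - acc₁.size)) ::
        (xs.drop (n - acc₁.size)).toChunks n := by
  induction xs generalizing acc₁ acc₂ with
  | nil => simp [toChunks.go, toChunks]
  | cons x xs ih =>
    rw [toChunks.go]
    by_cases hsz : acc₁.size = n
    · obtain ⟨k, rfl⟩ : ∃ k, n = k + 1 := Nat.exists_eq_add_one.mpr (hsz ▸ h₀)
      have hx : toChunks (k + 1) (x :: xs) = toChunks.go (k + 1) xs #[x] #[] := rfl
      simp only [hsz, beq_self_eq_true, if_true, Nat.sub_self, take_zero, drop_zero, append_nil]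
      rw [ih _ _ (by simp) (by simp), hx, ih _ _ (by simp) (by simp)]
      simp
    · simp only [beq_iff_eq, hsz, if_false]
      rw [ih _ _ (by simp) (by simp; omega),
        show n - acc₁.size = n - (acc₁.size + 1) + 1 by omega]
      simp

lemma toChunks_cons (hn : 0 < n) (x : α) (xs : List α) :
    (x :: xs).toChunks n = (x :: xs).take n :: ((x :: xs).drop n).toChunks n := by
  obtain ⟨k, rfl⟩ := Nat.exists_eq_add_one.mpr hn
  exact (toChunks_go_eq xs #[x] #[] (by simp) (by simp)).trans (by simp)

lemma length_toChunks (hn : 0 < n) (l : List α) :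
    (l.toChunks n).length = (l.length + n - 1) / n := by
  induction h : l.length using Nat.strong_induction_on generalizing l with
  | _ L ih =>
    cases l with
    | nil => subst h; simp [toChunks, Nat.div_eq_of_lt (Nat.sub_lt hn one_pos)]
    | cons x xs =>
      have hpos : 0 < (x :: xs).length := by simp
      rw [toChunks_cons hn, length_cons, ih _ (by rw [length_drop]; omega) _ rfl, length_drop,
        ← h, show (x :: xs).length + n - 1 = (x :: xs).length - 1 + n by omega,
        Nat.add_div_right _ hn]
      rcases le_or_gt (x :: xs).length n with hle | hgt
      · rw [Nat.div_eq_of_lt (by omega), Nat.div_eq_of_lt (by omega)]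
      · congr 2; omega

lemma eq_of_map_toChunks_eq {f : List α → β} (hn : 0 < n)
    (hf : ∀ a b : List α, a.length = b.length → a.length ≤ n → f a = f b → a = b)
    {l l' : List α} (hlen : l.length = l'.length)
    (h : (l.toChunks n).map f = (l'.toChunks n).map f) : l = l' := by
  induction hL : l.length using Nat.strong_induction_on generalizing l l' with
  | _ L ih =>
    match l, l' with
    | [], [] => rfl
    | [], _ :: _ | _ :: _, [] => simp at hlen
    | x :: xs, y :: ys =>
      rw [toChunks_cons hn, toChunks_cons hn, map_cons, map_cons, cons.injEq] at h
      have htake := hf _ _ (by simp [hlen]) (by simp) h.1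
      have hdrop :=
        ih _ (by simp only [length_drop, length_cons] at hL ⊢; omega) (by simp [hlen]) h.2 rfl
      rw [← take_append_drop n (x :: xs), htake, hdrop, take_append_drop]

end List

lemma bitsToNat_lt (l : List Bool) : bitsToNat l < 2 ^ l.length := by
  induction l with
  | nil => simp [bitsToNat]
  | cons b t ih => cases b <;> simp [bitsToNat, pow_succ] <;> omega

lemma eq_of_bitsToNat_eq {l l' : List Bool} (hlen : l.length = l'.length)
    (h : bitsToNat l = bitsToNat l') : l = l' := by
  induction l generalizing l' with
  | nil => exact (List.length_eq_zero_iff.mp hlen.symm).symm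
  | cons b t ih =>
    obtain _ | ⟨b', t'⟩ := l'
    · simp at hlen
    · simp only [List.length_cons, Nat.add_right_cancel_iff] at hlen
      have ht := hlen ▸ bitsToNat_lt t
      have ht' := bitsToNat_lt t'
      simp only [bitsToNat, hlen] at h
      obtain rfl : b = b' := by cases b <;> cases b' <;> simp at h ⊢ <;> omega
      rw [ih hlen (by cases b <;> simpa using h)]

lemma eq_of_padBlock_eq {n : ℕ} {l l' : List Bool} (hlen : l.length = l'.length)
    (hle : l.length ≤ n) (h : padBlock n l = padBlock n l') : l = l' := by
  have hpad : ∀ l : List Bool, l.length ≤ n →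
      (padBlock n l).toNat = bitsToNat (l ++ List.replicate (n - l.length) false) := by
    intro l hl
    rw [padBlock, blockToBV, BitVec.toNat_ofNat, Nat.mod_eq_of_lt]
    simpa [hl] using bitsToNat_lt (l ++ List.replicate (n - l.length) false)
  have hbits := congrArg BitVec.toNat h
  rw [hpad l hle, hpad l' (hlen ▸ hle)] at hbits
  exact (List.append_inj (eq_of_bitsToNat_eq (by simp [hlen]) hbits) hlen).1

lemma eq_of_blocksOf_eq {n : ℕ} (hn : 0 < n) {X X' : List Bool} (hlen : X.length = X'.length)
    (h : blocksOf n X = blocksOf n X') : X = X' :=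
  List.eq_of_map_toChunks_eq hn (fun _ _ => eq_of_padBlock_eq) hlen h

lemma numBlocks_eq {n : ℕ} (hn : 0 < n) (X : List Bool) :
    numBlocks n X = (X.length + n - 1) / n :=
  List.length_toChunks hn X

lemma length_eq_of_xcbLenBlock_eq {n : ℕ} {X T X' T' : List Bool}
    (hX : X.length < 2 ^ (n / 2)) (hT : T.length < 2 ^ (n / 2))
    (hX' : X'.length < 2 ^ (n / 2)) (hT' : T'.length < 2 ^ (n / 2))
    (h : xcbLenBlock n X T = xcbLenBlock n X' T') :
    X.length = X'.length ∧ T.length = T'.length := by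
  have hm : 0 < 2 ^ (n / 2) := by positivity
  have hlt : ∀ a b, a < 2 ^ (n / 2) → b < 2 ^ (n / 2) → a * 2 ^ (n / 2) + b < 2 ^ n :=
    fun a b ha hb =>
    calc a * 2 ^ (n / 2) + b < (a + 1) * 2 ^ (n / 2) := by nlinarith
      _ ≤ 2 ^ (n / 2) * 2 ^ (n / 2) := Nat.mul_le_mul_right _ ha
      _ = 2 ^ (n / 2 + n / 2) := (pow_add _ _ _).symm
      _ ≤ 2 ^ n := Nat.pow_le_pow_right two_pos (by omega)
  have hval := congrArg BitVec.toNat h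
  rw [xcbLenBlock, xcbLenBlock, BitVec.toNat_ofNat, BitVec.toNat_ofNat,
    Nat.mod_eq_of_lt (hlt _ _ hX hT), Nat.mod_eq_of_lt (hlt _ _ hX' hT')] at hval
  have hdm : ∀ a b, b < 2 ^ (n / 2) →
      (a * 2 ^ (n / 2) + b) / 2 ^ (n / 2) = a ∧ (a * 2 ^ (n / 2) + b) % 2 ^ (n / 2) = b :=
    fun a b hb => (Nat.div_mod_unique hm).2 ⟨by ring, hb⟩
  obtain ⟨hdiv, hmod⟩ := hdm X.length _ hT
  obtain ⟨hdiv', hmod'⟩ := hdm X'.length _ hT'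
  rw [hval] at hdiv hmod
  exact ⟨hdiv.symm.trans hdiv', hmod.symm.trans hmod'⟩

open Polynomial

section Horner

variable {R : Type*} [Semiring R]

noncomputable def hornerPoly (cs : List R) : R[X] :=
  cs.foldl (fun p c => (p + C c) * X) 0

lemma hornerPoly_append_singleton (cs : List R) (c : R) :
    hornerPoly (cs ++ [c]) = (hornerPoly cs + C c) * X := by
  simp [hornerPoly]

lemma eval_hornerPoly (cs : List R) (x : R) :
    (hornerPoly cs).eval x = cs.foldl (fun a c => (a + c) * x) 0 := by
  rw [← eval_zero (x := x), hornerPoly]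
  exact (List.foldl_hom _ fun p c => by simp).symm

lemma coeff_hornerPoly_zero (cs : List R) : (hornerPoly cs).coeff 0 = 0 := by
  induction cs using List.reverseRecOn with
  | nil => simp [hornerPoly]
  | append_singleton cs c _ => simp [hornerPoly_append_singleton]

lemma coeff_hornerPoly_succ (cs : List R) (k : ℕ) :
    (hornerPoly cs).coeff (k + 1) = cs.reverse.getD k 0 := by
  induction cs using List.reverseRecOn generalizing k with
  | nil => simp [hornerPoly]
  | append_singleton cs c ih =>
    rw [hornerPoly_append_singleton, coeff_mul_X, coeff_add, coeff_C]
    cases k with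
    | zero => simp [coeff_hornerPoly_zero]
    | succ k => simp [ih]

lemma natDegree_hornerPoly_le (cs : List R) : (hornerPoly cs).natDegree ≤ cs.length := by
  refine natDegree_le_iff_coeff_eq_zero.2 fun N hN => ?_
  obtain ⟨k, rfl⟩ := Nat.exists_eq_add_one.mpr (pos_of_gt hN)
  rw [coeff_hornerPoly_succ, List.getD_eq_default _ _ (by simp; omega)]

lemma eq_of_hornerPoly_eq {cs cs' : List R} (hlen : cs.length = cs'.length)
    (h : hornerPoly cs = hornerPoly cs') : cs = cs' := by
  refine List.reverse_injective (List.ext_getElem (by simp [hlen]) fun k hk hk' => ?_)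
  have hcoeff := congrArg (coeff · (k + 1)) h
  simp only [coeff_hornerPoly_succ, List.getD_eq_getElem _ _ hk,
    List.getD_eq_getElem _ _ hk'] at hcoeff
  exact hcoeff

end Horner

lemma Polynomial.C_add_add_ne_zero {R : Type*} [Ring R] [CharP R 2] {p q : R[X]}
    (hp : p.coeff 0 = 0) (hq : q.coeff 0 = 0) (hpq : p ≠ q) (c : R) : C c + p + q ≠ 0 := by
  intro h
  obtain rfl : c = 0 := by simpa [hp, hq] using congrArg (coeff · 0) h
  exact hpq (CharTwo.add_eq_zero.mp (by simpa using h))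

lemma Polynomial.card_eval_eq_zero_le {α R : Type*} [CommRing R] [IsDomain R] {f : α → R}
    (hf : Function.Injective f) {p : R[X]} (hp : p ≠ 0) :
    Nat.card {a // p.eval (f a) = 0} ≤ p.natDegree := by
  classical
  calc Nat.card {a // p.eval (f a) = 0}
      ≤ Nat.card p.roots.toFinset :=
        Nat.card_le_card_of_injective (fun a => ⟨f a.1, by simp [mem_roots hp, a.2]⟩)
          fun a b hab => Subtype.ext (hf (congrArg Subtype.val hab))
    _ ≤ p.roots.card := by rw [Nat.card_eq_finsetCard]; exact p.roots.toFinset_card_le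
    _ ≤ p.natDegree := card_roots' p

lemma Nat.card_subtype_prod_le {α β : Type*} [Fintype α] [Finite β] {p : α → β → Prop}
    {k : ℕ} (h : ∀ a, Nat.card {b // p a b} ≤ k) :
    Nat.card {x : α × β // p x.1 x.2} ≤ Nat.card α * k := by
  rw [Nat.card_congr (Equiv.subtypeProdEquivSigmaSubtype p), Nat.card_sigma,
    Nat.card_eq_fintype_card, ← smul_eq_mul, ← Finset.card_univ]
  exact Finset.sum_le_card_nsmul _ _ _ fun a _ => h a

lemma charP_two_of_map_xor {n : ℕ} {F : Type*} [Field F] (ι : BitVec n ≃ F)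
    (hι : ∀ x y : BitVec n, ι (x ^^^ y) = ι x + ι y) : CharP F 2 := by
  have h0 : ι 0#n = 0 := by simpa using hι 0#n 0#n
  refine CharTwo.of_one_ne_zero_of_two_eq_zero one_ne_zero ?_
  obtain ⟨x, hx⟩ := ι.surjective 1
  rw [← one_add_one_eq_two, ← hx, ← hι, BitVec.xor_self, h0]

def xcbBlocks (n : ℕ) (X T : List Bool) : List (BitVec n) :=
  blocksOf n X ++ blocksOf n T ++ [xcbLenBlock n X T]

lemma length_blocksOf (n : ℕ) (X : List Bool) : (blocksOf n X).length = numBlocks n X := by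
  simp [blocksOf, numBlocks]

section XCBPoly

variable {n : ℕ} {F : Type*} [Field F] (ι : BitVec n ≃ F)

noncomputable def xcbHashPoly (X T : List Bool) : F[X] :=
  hornerPoly ((xcbBlocks n X T).map ι)

lemma eval_xcbHashPoly (h : F) (X T : List Bool) :
    (xcbHashPoly ι X T).eval h = xcbHash ι h X T := by
  simp [xcbHashPoly, eval_hornerPoly, xcbHash, xcbBlocks]

lemma coeff_xcbHashPoly_zero (X T : List Bool) : (xcbHashPoly ι X T).coeff 0 = 0 :=
  coeff_hornerPoly_zero _

lemma coeff_xcbHashPoly_one (X T : List Bool) :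
    (xcbHashPoly ι X T).coeff 1 = ι (xcbLenBlock n X T) := by
  simp [xcbHashPoly, coeff_hornerPoly_succ _ 0, xcbBlocks]

lemma natDegree_xcbHashPoly_le (X T : List Bool) :
    (xcbHashPoly ι X T).natDegree ≤ numBlocks n X + numBlocks n T + 1 :=
  (natDegree_hornerPoly_le _).trans (by simp [xcbBlocks, length_blocksOf, add_assoc])

lemma eq_of_xcbHashPoly_eq (hn : 0 < n) {X T X' T' : List Bool}
    (hX : X.length < 2 ^ (n / 2)) (hT : T.length < 2 ^ (n / 2))
    (hX' : X'.length < 2 ^ (n / 2)) (hT' : T'.length < 2 ^ (n / 2))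
    (h : xcbHashPoly ι X T = xcbHashPoly ι X' T') : X = X' ∧ T = T' := by
  obtain ⟨hXlen, hTlen⟩ := length_eq_of_xcbLenBlock_eq hX hT hX' hT'
    (ι.injective (by rw [← coeff_xcbHashPoly_one, h, coeff_xcbHashPoly_one]))
  have hnum : ∀ {Y Y' : List Bool}, Y.length = Y'.length →
      (blocksOf n Y).length = (blocksOf n Y').length := fun hY => by
    rw [length_blocksOf, length_blocksOf, numBlocks_eq hn, numBlocks_eq hn, hY]
  have hblocks : xcbBlocks n X T = xcbBlocks n X' T' :=
    List.map_injective_iff.2 ι.injective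
      (eq_of_hornerPoly_eq (by simp [xcbBlocks, hnum hXlen, hnum hTlen]) h)
  obtain ⟨hXT, -⟩ := List.append_inj' hblocks rfl
  obtain ⟨hbX, hbT⟩ := List.append_inj hXT (hnum hXlen)
  exact ⟨eq_of_blocksOf_eq hn hXlen hbX, eq_of_blocksOf_eq hn hTlen hbT⟩

end XCBPoly

theorem xcbHash_bivariate_prob_general (n : ℕ) (hn : 0 < n)
    (F : Type*) [Field F] (ι : BitVec n ≃ F)
    (hι : ∀ x y : BitVec n, ι (x ^^^ y) = ι x + ι y)
    (Q Q' R R' T T' : List Bool) (hne : (R, T) ≠ (R', T'))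
    (hR : R.length < 2 ^ (n / 2)) (hR' : R'.length < 2 ^ (n / 2))
    (hT : T.length < 2 ^ (n / 2)) (hT' : T'.length < 2 ^ (n / 2))
    (ℓ : ℕ) (hℓ : ℓ = max
      (max (numBlocks n Q + numBlocks n T + 1) (numBlocks n Q' + numBlocks n T' + 1))
      (max (numBlocks n R + numBlocks n T + 1) (numBlocks n R' + numBlocks n T' + 1))) :
    (Nat.card {hks : BitVec n × BitVec n //
        xcbHash ι (ι hks.1) Q T + xcbHash ι (ι hks.1) Q' T' +
          xcbHash ι (ι hks.2) R T + xcbHash ι (ι hks.2) R' T' = 0} : ℝ) /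
        ((2 : ℝ) ^ n * (2 : ℝ) ^ n) ≤
      (ℓ : ℝ) / ((2 : ℝ) ^ n) := by
  have : CharP F 2 := charP_two_of_map_xor ι hι
  have hRT : xcbHashPoly ι R T ≠ xcbHashPoly ι R' T' := fun h => by
    obtain ⟨rfl, rfl⟩ := eq_of_xcbHashPoly_eq ι hn hR hT hR' hT' h
    exact hne rfl
  have hfiber (h₁ : BitVec n) : Nat.card {h₂ : BitVec n //
      xcbHash ι (ι h₁) Q T + xcbHash ι (ι h₁) Q' T' +
        xcbHash ι (ι h₂) R T + xcbHash ι (ι h₂) R' T' = 0} ≤ ℓ := by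
    set q := C (xcbHash ι (ι h₁) Q T + xcbHash ι (ι h₁) Q' T') +
      xcbHashPoly ι R T + xcbHashPoly ι R' T'
    have hq : q ≠ 0 :=
      C_add_add_ne_zero (coeff_xcbHashPoly_zero ι R T) (coeff_xcbHashPoly_zero ι R' T') hRT _
    have hdeg : q.natDegree ≤ ℓ := by
      have hdeg₁ := natDegree_xcbHashPoly_le ι R T
      have hdeg₂ := natDegree_xcbHashPoly_le ι R' T'
      exact natDegree_add_le_of_degree_le
        (natDegree_add_le_of_degree_le (by simp) (by omega)) (by omega)
    calc _ = Nat.card {h₂ : BitVec n // q.eval (ι h₂) = 0} := by simp [q, eval_xcbHashPoly]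
      _ ≤ q.natDegree := card_eval_eq_zero_le ι.injective hq
      _ ≤ ℓ := hdeg
  have hcard := Nat.card_subtype_prod_le hfiber
  rw [Nat.card_congr BitVec.equivFin.toEquiv, Nat.card_fin] at hcard
  calc _ ≤ ((2 ^ n * ℓ : ℕ) : ℝ) / (2 ^ n * 2 ^ n) :=
        div_le_div_of_nonneg_right (by exact_mod_cast hcard) (by positivity)
    _ = ℓ / 2 ^ n := by push_cast; exact mul_div_mul_left _ _ (by positivity)

/-- For `(R,T) ≠ (R',T')` and independent uniformly random keys `h₁, h₂`,
`Pr[H_{h₁}(Q,T) ⊕ H_{h₁}(Q',T') ⊕ H_{h₂}(R,T) ⊕ H_{h₂}(R',T') = 0] ≤ ℓ/2ⁿ`,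
where `ℓ` is the maximum of the degrees of the four hash values as polynomials
in `h₁` resp. `h₂`. -/
theorem xcbHash_bivariate_prob (n : ℕ) (hn : 0 < n) (hEven : Even n)
    (F : Type*) [Field F] (ι : BitVec n ≃ F)
    (hι : ∀ x y : BitVec n, ι (x ^^^ y) = ι x + ι y)
    (Q Q' R R' T T' : List Bool) (hne : (R, T) ≠ (R', T'))
    (hQ : Q.length < 2 ^ (n / 2)) (hQ' : Q'.length < 2 ^ (n / 2))
    (hR : R.length < 2 ^ (n / 2)) (hR' : R'.length < 2 ^ (n / 2))
    (hT : T.length < 2 ^ (n / 2)) (hT' : T'.length < 2 ^ (n / 2))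
    (ℓ : ℕ) (hℓ : ℓ = max
      (max (numBlocks n Q + numBlocks n T + 1) (numBlocks n Q' + numBlocks n T' + 1))
      (max (numBlocks n R + numBlocks n T + 1) (numBlocks n R' + numBlocks n T' + 1))) :
    (Nat.card {hks : BitVec n × BitVec n //
        xcbHash ι (ι hks.1) Q T + xcbHash ι (ι hks.1) Q' T' +
          xcbHash ι (ι hks.2) R T + xcbHash ι (ι hks.2) R' T' = 0} : ℝ) /
        ((2 : ℝ) ^ n * (2 : ℝ) ^ n) ≤
      (ℓ : ℝ) / ((2 : ℝ) ^ n) :=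
  xcbHash_bivariate_prob_general n hn F ι hι Q Q' R R' T T' hne hR hR' hT hT' ℓ hℓ
end

section
/- Let E_K be any permutation of {0,1}^n, let h ∈ {0,1}^n, and let x ∈ {0,1}^n. With empty tweak, let C^(1) = C_1^(1) = HCTR_{K,h}(x) and C^(2) = C_1^(2) ‖ C_2^(2) = HCTR_{K,h}(x‖0), where |C_1^(2)| = n and C_2^(2) is a single bit. If C_2^(2) = 1, then C_1^(1) ⊕ C_1^(2) = e · h², where e ∈ GF(2^n) is the field element corresponding to the n-bit string 1‖0^{n−1} (the padding pad(1) of the single bit 1). In particular, C_1^(1) ⊕ C_1^(2) determines h² and hence the hash key h. -/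
/-- The HCTR hash function: `H_h(P) = h` if `P` is empty, and otherwise
`H_h(P) = P₁h^{m+1} ⊕ ⋯ ⊕ (P_m‖0^{n-r})h² ⊕ bin_n(|P|)h` (Horner evaluation),
where the equivalence `ι` identifies `{0,1}ⁿ` with `GF(2ⁿ)` (XOR = addition). -/
def hctrHash {n : ℕ} {F : Type*} [Field F] (ι : BitVec n ≃ F) (h : F)
    (P : List Bool) : F :=
  if P.isEmpty then h
  else ((blocksOf n P).map ι ++ [ι (BitVec.ofNat n P.length)]).foldl
    (fun acc c => (acc + c) * h) 0

/-- Bits of an `n`-bit block, msb first. -/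
def bvToBits (n : ℕ) (X : BitVec n) : List Bool :=
  (List.range n).map fun i => X.toNat.testBit (n - 1 - i)

/-- The internal value `CC = P₁ ⊕ H_h(P₂‖…‖P_m‖T)` of HCTR. -/
def hctrCC {n : ℕ} {F : Type*} [Field F] (ι : BitVec n ≃ F) (hk : BitVec n)
    (T P : List Bool) : BitVec n :=
  blockToBV n (P.take n) ^^^ ι.symm (hctrHash ι (ι hk) (P.drop n ++ T))

/-- HCTR encryption with block-cipher permutation `E`, hash key `hk` and tweak `T`:
`CC = P₁ ⊕ H_h(P₂‖…‖P_m‖T)`, `S = CC ⊕ E(CC)`, `C_i = P_i ⊕ E(S ⊕ bin_n(i-1))`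
(truncated to `|P_i|` bits) for `2 ≤ i ≤ m`, and `C₁ = E(CC) ⊕ H_h(C₂‖…‖C_m‖T)`. -/
def hctrEnc {n : ℕ} {F : Type*} [Field F] (ι : BitVec n ≃ F)
    (E : Equiv.Perm (BitVec n)) (hk : BitVec n) (T P : List Bool) : List Bool :=
  let CC : BitVec n := hctrCC ι hk T P
  let S : BitVec n := CC ^^^ E CC
  let Crest : List Bool :=
    (((P.drop n).toChunks n).zipIdx.map fun p =>
      List.zipWith xor p.1 (bvToBits n (E (S ^^^ BitVec.ofNat n (p.2 + 1))))).flatten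
  let C1 : BitVec n := E CC ^^^ ι.symm (hctrHash ι (ι hk) (Crest ++ T))
  bvToBits n C1 ++ Crest

/-!
A one-block plaintext `x` and the plaintext `x‖0` reach the same internal value
`CC = x ⊕ h`: the hash of the empty string is `h` by convention, and the hash of the
single bit `0` is `pad(0)·h² ⊕ bin_n(1)·h = h` as well. Hence both encryptions use the
same `E(CC)`, and their first ciphertext blocks differ exactly by
`H_h(ε) ⊕ H_h(1) = h ⊕ (pad(1)·h² ⊕ h) = pad(1)·h²`.
-/

lemma bitsToNat_append_singleton (l : List Bool) (b : Bool) :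
    bitsToNat (l ++ [b]) = 2 * bitsToNat l + (if b then 1 else 0) := by
  induction l with
  | nil => cases b <;> simp [bitsToNat]
  | cons a t ih => cases a <;> simp [bitsToNat, ih, pow_succ]; ring

lemma bitsToNat_map_testBit (n m : ℕ) :
    bitsToNat ((List.range n).map fun i => m.testBit (n - 1 - i)) = m % 2 ^ n := by
  induction n generalizing m with
  | zero => simp [bitsToNat, Nat.mod_one]
  | succ n ih =>
    have hshift : (List.range n).map (fun i => m.testBit (n + 1 - 1 - i))
        = (List.range n).map (fun i => (m / 2).testBit (n - 1 - i)) := by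
      refine List.map_congr_left fun i hi => ?_
      rw [List.mem_range] at hi
      rw [show n + 1 - 1 - i = (n - 1 - i) + 1 by omega, Nat.testBit_add_one]
    rw [List.range_succ, List.map_append, hshift, List.map_singleton,
      bitsToNat_append_singleton, ih, show n + 1 - 1 - n = 0 by omega, Nat.testBit_zero,
      pow_succ', Nat.mod_mul]
    rcases Nat.mod_two_eq_zero_or_one m with h | h <;> simp [h, add_comm]

@[simp]
lemma blockToBV_bvToBits {n : ℕ} (X : BitVec n) : blockToBV n (bvToBits n X) = X := by
  rw [blockToBV, bvToBits, bitsToNat_map_testBit, Nat.mod_eq_of_lt X.isLt, BitVec.ofNat_toNat]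
  exact X.setWidth_eq

@[simp]
lemma length_bvToBits {n : ℕ} (X : BitVec n) : (bvToBits n X).length = n := by
  simp [bvToBits]

lemma bitsToNat_replicate_false (k : ℕ) : bitsToNat (List.replicate k false) = 0 := by
  induction k <;> simp [bitsToNat, List.replicate_succ, *]

lemma padBlock_singleton_false (n : ℕ) : padBlock n [false] = 0 := by
  rw [padBlock, blockToBV, List.singleton_append, ← List.replicate_succ,
    bitsToNat_replicate_false]
  rfl

@[simp]
lemma List.toChunks_nil {α : Type*} (n : ℕ) : ([] : List α).toChunks n = [] := by
  cases n <;> rfl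

lemma List.toChunks_singleton {α : Type*} (n : ℕ) (a : α) : [a].toChunks n = [[a]] := by
  cases n <;> rfl

section XorField

variable {n : ℕ} {F : Type*} [Field F] {ι : BitVec n ≃ F}

lemma map_zero_of_map_xor (hι : ∀ x y : BitVec n, ι (x ^^^ y) = ι x + ι y) : ι 0 = 0 := by
  simpa using hι 0 0

lemma add_self_eq_zero_of_map_xor (hι : ∀ x y : BitVec n, ι (x ^^^ y) = ι x + ι y) (a : F) :
    a + a = 0 := by
  rw [← ι.apply_symm_apply a, ← hι, BitVec.xor_self]
  exact map_zero_of_map_xor hι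

end XorField

section Hctr

variable {n : ℕ} {F : Type*} [Field F] (ι : BitVec n ≃ F)

lemma hctrHash_nil (h : F) : hctrHash ι h [] = h := rfl

lemma hctrHash_singleton (h : F) (b : Bool) :
    hctrHash ι h [b] = ι (padBlock n [b]) * h ^ 2 + ι 1 * h := by
  simp only [hctrHash, blocksOf, List.toChunks_singleton, List.isEmpty_cons,
    Bool.false_eq_true, if_false, List.map_singleton, List.length_singleton,
    List.singleton_append, List.foldl_cons, List.foldl_nil, zero_add]
  change ((ι (padBlock n [b])) * h + ι 1) * h = _
  ring

lemma hctrCC_bvToBits_append (hk x : BitVec n) (T R : List Bool) :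
    hctrCC ι hk T (bvToBits n x ++ R) = x ^^^ ι.symm (hctrHash ι (ι hk) (R ++ T)) := by
  rw [hctrCC, List.take_left' (length_bvToBits x), List.drop_left' (length_bvToBits x),
    blockToBV_bvToBits]

variable (E : Equiv.Perm (BitVec n)) (hk : BitVec n) (T : List Bool)

lemma blockToBV_take_hctrEnc (P : List Bool) :
    blockToBV n ((hctrEnc ι E hk T P).take n) =
      E (hctrCC ι hk T P) ^^^
        ι.symm (hctrHash ι (ι hk) ((hctrEnc ι E hk T P).drop n ++ T)) := by
  simp only [hctrEnc, List.take_left' (length_bvToBits _), List.drop_left' (length_bvToBits _),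
    blockToBV_bvToBits]

lemma drop_hctrEnc_of_length_le {P : List Bool} (hP : P.length ≤ n) :
    (hctrEnc ι E hk T P).drop n = [] := by
  simp [hctrEnc, List.drop_eq_nil_of_le hP]

lemma map_first_block_add_of_hctrCC_eq
    (hι : ∀ x y : BitVec n, ι (x ^^^ y) = ι x + ι y) {P P' : List Bool}
    (hCC : hctrCC ι hk T P = hctrCC ι hk T P') :
    ι (blockToBV n ((hctrEnc ι E hk T P).take n)) +
        ι (blockToBV n ((hctrEnc ι E hk T P').take n)) =
      hctrHash ι (ι hk) ((hctrEnc ι E hk T P).drop n ++ T) +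
        hctrHash ι (ι hk) ((hctrEnc ι E hk T P').drop n ++ T) := by
  rw [blockToBV_take_hctrEnc, blockToBV_take_hctrEnc, hCC, hι, hι, ι.apply_symm_apply,
    ι.apply_symm_apply]
  linear_combination add_self_eq_zero_of_map_xor hι (ι (E (hctrCC ι hk T P')))

end Hctr

theorem hctr_key_recovery_general (n : ℕ)
    (F : Type*) [Field F] (ι : BitVec n ≃ F)
    (hι : ∀ x y : BitVec n, ι (x ^^^ y) = ι x + ι y)
    (hone : ι 1 = 1)
    (E : Equiv.Perm (BitVec n)) (hk x : BitVec n)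
    (hbit : (hctrEnc ι E hk [] (bvToBits n x ++ [false])).drop n = [true]) :
    ι (blockToBV n (hctrEnc ι E hk [] (bvToBits n x))) +
      ι (blockToBV n ((hctrEnc ι E hk [] (bvToBits n x ++ [false])).take n)) =
      ι (padBlock n [true]) * ι hk ^ 2 := by
  have hhash_false : hctrHash ι (ι hk) [false] = ι hk := by
    rw [hctrHash_singleton, padBlock_singleton_false, map_zero_of_map_xor hι, hone]
    ring
  have hCC : hctrCC ι hk [] (bvToBits n x) = hctrCC ι hk [] (bvToBits n x ++ [false]) := by
    have h := hctrCC_bvToBits_append ι hk x [] []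
    rw [List.append_nil, List.append_nil] at h
    rw [h, hctrCC_bvToBits_append, List.append_nil, hctrHash_nil, hhash_false]
  have hdrop := drop_hctrEnc_of_length_le ι E hk [] (length_bvToBits x).le
  rw [← List.take_of_length_le (List.drop_eq_nil_iff.mp hdrop),
    map_first_block_add_of_hctrCC_eq ι E hk [] hι hCC, hdrop, hbit, List.append_nil,
    List.append_nil, hctrHash_nil, hctrHash_singleton, hone]
  linear_combination add_self_eq_zero_of_map_xor hι (ι hk)

/-- Hash-key recovery attack on HCTR: with empty tweak, if the last bit `C₂⁽²⁾` of the
encryption of `x‖0` equals `1`, then `C₁⁽¹⁾ ⊕ C₁⁽²⁾ = e·h²`, where `e` corresponds to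
the `n`-bit string `1‖0^{n-1} = pad(1)`. -/
theorem hctr_key_recovery (n : ℕ) (hn : 1 ≤ n)
    (F : Type*) [Field F] (ι : BitVec n ≃ F)
    (hι : ∀ x y : BitVec n, ι (x ^^^ y) = ι x + ι y)
    (hone : ι 1 = 1)
    (E : Equiv.Perm (BitVec n)) (hk x : BitVec n)
    (hbit : (hctrEnc ι E hk [] (bvToBits n x ++ [false])).drop n = [true]) :
    ι (blockToBV n (hctrEnc ι E hk [] (bvToBits n x))) +
      ι (blockToBV n ((hctrEnc ι E hk [] (bvToBits n x ++ [false])).take n)) =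
      ι (padBlock n [true]) * ι hk ^ 2 :=
  hctr_key_recovery_general n F ι hι hone E hk x hbit
end
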